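/- arXiv:1202.5474 — 2 statements merged into one kernel-verified Lean document; each statement's English description precedes it below -/
import Mathlib

section
/- Let m ≥ 2 be an integer, σ > 0 and t > 0 real numbers, and v₁, v₂ ∈ ℂ^m with v₂ ≠ 0, v₁^H v₂ ≠ 0, and v₁ not a scalar multiple of v₂. Then there exists a vector v_δ in the linear span of {v₁, v₂} with ‖v_δ‖ = t such that |(v₁ + v_δ)^H v₂|² / (σ² + ‖v₁ + v_δ‖²) = |v₁^H v₂|² / (σ² + ‖v₁‖²). -/
/-!
Write `v₁ = p + q` with `p` the projection of `v₁` onto `ℂ ∙ v₂` and `q ≠ 0` orthogonal to `v₂`.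
For `w = (1 + s) • p + (1 + c) • q` the numerator `|⟪w, v₂⟫|²` scales by `(1 + s)²`, so the ratio
is unchanged exactly when `σ² + ‖w‖²` scales by `(1 + s)²` too; this determines `c ≥ s` as a
continuous function of `s ≥ 0`. Along this curve `‖w - v₁‖² = s² ‖p‖² + c² ‖q‖²` runs continuously
from `0` to `∞`, so it takes the value `t²` by the intermediate value theorem.
-/

open Matrix

open scoped InnerProductSpace

/-- The root `c ≥ s` of `(1 + c)² Q = (1 + s)² (K + Q) - K`, with `K = σ²`, `Q = ‖q‖²`. -/
noncomputable def compensatingCoeff (K Q s : ℝ) : ℝ :=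
  √((1 + s) ^ 2 + s * (2 + s) * (K / Q)) - 1

lemma compensatingCoeff_zero (K Q : ℝ) : compensatingCoeff K Q 0 = 0 := by
  simp [compensatingCoeff]

lemma continuous_compensatingCoeff (K Q : ℝ) : Continuous (compensatingCoeff K Q) := by
  unfold compensatingCoeff
  fun_prop

lemma sq_add_one_le_radicand {K Q s : ℝ} (hK : 0 ≤ K) (hQ : 0 ≤ Q) (hs : 0 ≤ s) :
    (1 + s) ^ 2 ≤ (1 + s) ^ 2 + s * (2 + s) * (K / Q) :=
  le_add_of_nonneg_right (by positivity)

lemma le_compensatingCoeff {K Q s : ℝ} (hK : 0 ≤ K) (hQ : 0 ≤ Q) (hs : 0 ≤ s) :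
    s ≤ compensatingCoeff K Q s := by
  have := Real.le_sqrt_of_sq_le (sq_add_one_le_radicand hK hQ hs)
  unfold compensatingCoeff
  linarith

lemma one_add_compensatingCoeff_sq {K Q s : ℝ} (hK : 0 ≤ K) (hQ : 0 ≤ Q) (hs : 0 ≤ s) :
    (1 + compensatingCoeff K Q s) ^ 2 = (1 + s) ^ 2 + s * (2 + s) * (K / Q) := by
  rw [compensatingCoeff, add_sub_cancel, Real.sq_sqrt]
  exact (sq_nonneg _).trans (sq_add_one_le_radicand hK hQ hs)

lemma add_sq_mul_add_compensatingCoeff_sq_mul {K Q s : ℝ} (hK : 0 ≤ K) (hQ : 0 < Q) (hs : 0 ≤ s)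
    (P : ℝ) :
    K + (1 + s) ^ 2 * P + (1 + compensatingCoeff K Q s) ^ 2 * Q = (1 + s) ^ 2 * (K + P + Q) := by
  rw [one_add_compensatingCoeff_sq hK hQ.le hs]
  field_simp
  ring

lemma exists_sq_mul_add_compensatingCoeff_sq_mul_eq {K P Q t : ℝ} (hK : 0 ≤ K) (hP : 0 ≤ P)
    (hQ : 0 < Q) (ht : 0 ≤ t) :
    ∃ s, 0 ≤ s ∧ s ^ 2 * P + compensatingCoeff K Q s ^ 2 * Q = t ^ 2 := by
  set f : ℝ → ℝ := fun s ↦ s ^ 2 * P + compensatingCoeff K Q s ^ 2 * Q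
  have hf : Continuous f := by
    have := continuous_compensatingCoeff K Q
    fun_prop
  set M := t / √Q
  have hM : 0 ≤ M := by positivity
  have hfM : t ^ 2 ≤ f M := by
    have hMQ : M ^ 2 * Q = t ^ 2 := by
      rw [div_pow, Real.sq_sqrt hQ.le, div_mul_cancel₀ _ hQ.ne']
    have hcM : M ^ 2 ≤ compensatingCoeff K Q M ^ 2 :=
      pow_le_pow_left₀ hM (le_compensatingCoeff hK hQ.le hM) 2
    have : M ^ 2 * Q ≤ compensatingCoeff K Q M ^ 2 * Q := by gcongr
    have : 0 ≤ M ^ 2 * P := by positivity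
    simp only [f]
    linarith
  have hf0 : f 0 = 0 := by simp [f, compensatingCoeff_zero]
  obtain ⟨s, hs, hfs⟩ :=
    intermediate_value_Icc hM hf.continuousOn ⟨by rw [hf0]; positivity, hfM⟩
  exact ⟨s, hs.1, hfs⟩

section InnerProductSpace

variable {𝕜 E : Type*} [RCLike 𝕜] [NormedAddCommGroup E] [InnerProductSpace 𝕜 E]

lemma norm_smul_add_smul_sq_of_inner_eq_zero {x y : E} (h : ⟪x, y⟫_𝕜 = 0) (a b : 𝕜) :
    ‖a • x + b • y‖ ^ 2 = ‖a‖ ^ 2 * ‖x‖ ^ 2 + ‖b‖ ^ 2 * ‖y‖ ^ 2 := by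
  have hab : ⟪a • x, b • y⟫_𝕜 = 0 := by
    rw [inner_smul_left, inner_smul_right, h, mul_zero, mul_zero]
  rw [sq, norm_add_sq_eq_norm_sq_add_norm_sq_of_inner_eq_zero _ _ hab, norm_smul, norm_smul]
  ring

lemma norm_ofReal_smul_add_ofReal_smul_sq_of_inner_eq_zero {x y : E} (h : ⟪x, y⟫_𝕜 = 0)
    (a b : ℝ) : ‖(a : 𝕜) • x + (b : 𝕜) • y‖ ^ 2 = a ^ 2 * ‖x‖ ^ 2 + b ^ 2 * ‖y‖ ^ 2 := by
  rw [norm_smul_add_smul_sq_of_inner_eq_zero h, RCLike.norm_ofReal, RCLike.norm_ofReal, sq_abs,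
    sq_abs]

theorem exists_mem_span_norm_eq_and_ratio_eq {v₁ v₂ : E} (h : v₁ ∉ 𝕜 ∙ v₂) (σ : ℝ) {t : ℝ}
    (ht : 0 ≤ t) :
    ∃ vδ ∈ Submodule.span 𝕜 {v₁, v₂}, ‖vδ‖ = t ∧
      ‖⟪v₁ + vδ, v₂⟫_𝕜‖ ^ 2 / (σ ^ 2 + ‖v₁ + vδ‖ ^ 2) = ‖⟪v₁, v₂⟫_𝕜‖ ^ 2 / (σ ^ 2 + ‖v₁‖ ^ 2) := by
  set p := (𝕜 ∙ v₂).starProjection v₁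
  set q := v₁ - p
  have hv₁ : v₁ = p + q := (add_sub_cancel p v₁).symm
  have hq : q ∈ (𝕜 ∙ v₂)ᗮ := Submodule.sub_starProjection_mem_orthogonal v₁
  have hqv₂ : ⟪q, v₂⟫_𝕜 = 0 :=
    Submodule.inner_left_of_mem_orthogonal (Submodule.mem_span_singleton_self v₂) hq
  have hpq : ⟪p, q⟫_𝕜 = 0 := Submodule.inner_right_of_mem_orthogonal
    ((𝕜 ∙ v₂).starProjection_apply_mem v₁) hq
  have hq₀ : q ≠ 0 := fun hq₀ ↦ h <| by
    rw [hv₁, hq₀, add_zero]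
    exact (𝕜 ∙ v₂).starProjection_apply_mem v₁
  obtain ⟨s, hs, hst⟩ := exists_sq_mul_add_compensatingCoeff_sq_mul_eq (sq_nonneg σ)
    (sq_nonneg ‖p‖) (by positivity : 0 < ‖q‖ ^ 2) ht
  set c := compensatingCoeff (σ ^ 2) (‖q‖ ^ 2) s
  have hw : v₁ + ((s : 𝕜) • p + (c : 𝕜) • q) = ((1 + s : ℝ) : 𝕜) • p + ((1 + c : ℝ) : 𝕜) • q := by
    rw [hv₁]
    push_cast
    module
  refine ⟨(s : 𝕜) • p + (c : 𝕜) • q, ?_, ?_, ?_⟩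
  · have hp : p ∈ Submodule.span 𝕜 {v₁, v₂} :=
      Submodule.span_mono (Set.subset_insert v₁ {v₂}) ((𝕜 ∙ v₂).starProjection_apply_mem v₁)
    have hv₁' : v₁ ∈ Submodule.span 𝕜 {v₁, v₂} := Submodule.subset_span (Set.mem_insert v₁ _)
    exact add_mem (Submodule.smul_mem _ _ hp) (Submodule.smul_mem _ _ (sub_mem hv₁' hp))
  · rw [← pow_left_inj₀ (norm_nonneg _) ht two_ne_zero,
      norm_ofReal_smul_add_ofReal_smul_sq_of_inner_eq_zero hpq, hst]
  · have hpv₂ : ⟪p, v₂⟫_𝕜 = ⟪v₁, v₂⟫_𝕜 := by rw [hv₁, inner_add_left, hqv₂, add_zero]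
    have hnum : ⟪((1 + s : ℝ) : 𝕜) • p + ((1 + c : ℝ) : 𝕜) • q, v₂⟫_𝕜 =
        (1 + s : ℝ) * ⟪v₁, v₂⟫_𝕜 := by
      rw [inner_add_left, inner_smul_left, inner_smul_left, hqv₂, hpv₂, RCLike.conj_ofReal,
        mul_zero, add_zero]
    have hden : ‖v₁‖ ^ 2 = ‖p‖ ^ 2 + ‖q‖ ^ 2 := by
      simpa [← hv₁] using norm_ofReal_smul_add_ofReal_smul_sq_of_inner_eq_zero (𝕜 := 𝕜) hpq 1 1
    rw [hw, hnum, norm_ofReal_smul_add_ofReal_smul_sq_of_inner_eq_zero hpq, hden, norm_mul,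
      RCLike.norm_ofReal, mul_pow, sq_abs, ← add_assoc,
      add_sq_mul_add_compensatingCoeff_sq_mul (sq_nonneg σ) (by positivity) hs,
      mul_div_mul_left _ _ (by positivity), add_assoc]

end InnerProductSpace

lemma star_dotProduct_eq_inner_toLp {ι 𝕜 : Type*} [Fintype ι] [RCLike 𝕜] (x y : ι → 𝕜) :
    star x ⬝ᵥ y = ⟪WithLp.toLp 2 x, WithLp.toLp 2 y⟫_𝕜 := by
  rw [EuclideanSpace.inner_toLp_toLp, dotProduct_comm]

lemma re_star_dotProduct_self {ι : Type*} [Fintype ι] (x : ι → ℂ) :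
    (star x ⬝ᵥ x).re = ‖WithLp.toLp 2 x‖ ^ 2 := by
  rw [star_dotProduct_eq_inner_toLp, ← RCLike.re_to_complex, inner_self_eq_norm_sq]

theorem stmt6_general (m : ℕ) (σ t : ℝ) (ht : 0 < t)
    (v₁ v₂ : Fin m → ℂ)
    (hns : ∀ c : ℂ, v₁ ≠ c • v₂) :
    ∃ vδ : Fin m → ℂ,
      vδ ∈ Submodule.span ℂ ({v₁, v₂} : Set (Fin m → ℂ)) ∧
      Real.sqrt (star vδ ⬝ᵥ vδ).re = t ∧
      ‖star (v₁ + vδ) ⬝ᵥ v₂‖ ^ 2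
          / (σ ^ 2 + (star (v₁ + vδ) ⬝ᵥ (v₁ + vδ)).re)
        = ‖star v₁ ⬝ᵥ v₂‖ ^ 2 / (σ ^ 2 + (star v₁ ⬝ᵥ v₁).re) := by
  have hnot : WithLp.toLp 2 v₁ ∉ ℂ ∙ WithLp.toLp 2 v₂ := by
    intro h
    obtain ⟨c, hc⟩ := Submodule.mem_span_singleton.mp h
    exact hns c (congrArg WithLp.ofLp hc).symm
  obtain ⟨wδ, hmem, hnorm, hratio⟩ := exists_mem_span_norm_eq_and_ratio_eq hnot σ ht.le
  refine ⟨wδ.ofLp, ?_, ?_, ?_⟩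
  · have := Submodule.apply_mem_span_image_of_mem_span
      (WithLp.linearEquiv 2 ℂ (Fin m → ℂ)).toLinearMap hmem
    rwa [Set.image_pair] at this
  · rw [re_star_dotProduct_self, WithLp.toLp_ofLp, Real.sqrt_sq (norm_nonneg _), hnorm]
  · rwa [re_star_dotProduct_self, re_star_dotProduct_self, star_dotProduct_eq_inner_toLp,
      star_dotProduct_eq_inner_toLp, WithLp.toLp_add, WithLp.toLp_ofLp]

/-- existence claim, eq. (23) of Appendix B, Case 2: there is a
perturbation `vδ` of any prescribed norm `t` in the span of `{v₁, v₂}` keeping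
the ratio `|(v₁+vδ)ᴴv₂|²/(σ² + ‖v₁+vδ‖²)` invariant. -/
theorem stmt6 (m : ℕ) (hm : 2 ≤ m) (σ t : ℝ) (hσ : 0 < σ) (ht : 0 < t)
    (v₁ v₂ : Fin m → ℂ) (hv₂ : v₂ ≠ 0) (hinner : star v₁ ⬝ᵥ v₂ ≠ 0)
    (hns : ∀ c : ℂ, v₁ ≠ c • v₂) :
    ∃ vδ : Fin m → ℂ,
      vδ ∈ Submodule.span ℂ ({v₁, v₂} : Set (Fin m → ℂ)) ∧
      Real.sqrt (star vδ ⬝ᵥ vδ).re = t ∧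
      ‖star (v₁ + vδ) ⬝ᵥ v₂‖ ^ 2
          / (σ ^ 2 + (star (v₁ + vδ) ⬝ᵥ (v₁ + vδ)).re)
        = ‖star v₁ ⬝ᵥ v₂‖ ^ 2 / (σ ^ 2 + (star v₁ ⬝ᵥ v₁).re) :=
  stmt6_general m σ t ht v₁ v₂ hns
end

section
/- Let N_T, N_R be positive integers, σ₂ > 0 a real number, S ≥ 0 a real number, H₁₂, H₂₂ ∈ ℂ^{N_R×N_T}, w₂ ∈ ℂ^{N_T}, and w₁ ∈ ℂ^{N_T} with ‖w₁‖ = 1. Define the Hermitian matrix C = H₁₂^H H₂₂ w₂ w₂^H H₂₂^H H₁₂ − (w₂^H H₂₂^H H₂₂ w₂ − σ₂²S)·(σ₂²I + H₁₂^H H₁₂). Then w₂^H H₂₂^H (σ₂²I + (H₁₂w₁)(H₁₂w₁)^H)^{-1} H₂₂ w₂ = S holds if and only if both w₁^H C w₁ = 0 and w₂^H H₂₂^H H₂₂ w₂ ≥ σ₂²S hold. -/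
/-!
Put `a = H₂₂ w₂` and `b = H₁₂ w₁`. By Sherman–Morrison,
`(σ²I + b bᴴ)⁻¹ = σ⁻² (I - b bᴴ / (σ² + ‖b‖²))`, so the SINR equals
`σ⁻² (‖a‖² - |bᴴa|² / (σ² + ‖b‖²))`, while `‖w₁‖ = 1` gives
`w₁ᴴ C w₁ = |bᴴa|² - (‖a‖² - σ²S)(σ² + ‖b‖²)`. Clearing the positive denominators turns
the SINR equation into `w₁ᴴ C w₁ = 0`, and then `|bᴴa|² ≥ 0` forces `‖a‖² ≥ σ²S`.
-/

open Matrix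

theorem dotProduct_vecMulVec_mulVec {n K : Type*} [Fintype n] [CommSemiring K]
    (x u v y : n → K) : x ⬝ᵥ (vecMulVec u v *ᵥ y) = (x ⬝ᵥ u) * (v ⬝ᵥ y) := by
  rw [dotProduct_mulVec, vecMul_vecMulVec, smul_dotProduct, smul_eq_mul]

section ShermanMorrison

variable {n K : Type*} [Fintype n] [DecidableEq n] [Field K]

theorem inv_smul_one_add_vecMulVec {c : K} (hc : c ≠ 0) {u v : n → K}
    (huv : c + v ⬝ᵥ u ≠ 0) :
    (c • 1 + vecMulVec u v)⁻¹ = c⁻¹ • (1 - (c + v ⬝ᵥ u)⁻¹ • vecMulVec u v) := by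
  refine inv_eq_right_inv ?_
  have hsq : vecMulVec u v * vecMulVec u v = (v ⬝ᵥ u) • vecMulVec u v := by
    rw [vecMulVec_mul_vecMulVec, vecMulVec_smul]
  rw [Matrix.mul_smul, Matrix.mul_sub, Matrix.mul_smul, Matrix.mul_one, Matrix.add_mul, hsq,
    Matrix.smul_mul, Matrix.one_mul, ← add_smul, smul_smul, inv_mul_cancel₀ huv, one_smul,
    add_sub_cancel_right, smul_smul, inv_mul_cancel₀ hc, one_smul]

theorem dotProduct_inv_smul_one_add_vecMulVec_mulVec {c : K} (hc : c ≠ 0) {u v : n → K}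
    (huv : c + v ⬝ᵥ u ≠ 0) (x y : n → K) :
    x ⬝ᵥ ((c • 1 + vecMulVec u v)⁻¹ *ᵥ y)
      = c⁻¹ * (x ⬝ᵥ y - (c + v ⬝ᵥ u)⁻¹ * ((x ⬝ᵥ u) * (v ⬝ᵥ y))) := by
  rw [inv_smul_one_add_vecMulVec hc huv, smul_mulVec, sub_mulVec, smul_mulVec, one_mulVec,
    dotProduct_smul, dotProduct_sub, dotProduct_smul, dotProduct_vecMulVec_mulVec,
    smul_eq_mul, smul_eq_mul]

end ShermanMorrison

section StarDotProduct

variable {m n R : Type*} [Fintype m] [Fintype n] [CommRing R] [StarRing R]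

theorem star_dotProduct_conjTranspose_mulVec (H : Matrix m n R) (w : n → R) (x : m → R) :
    star w ⬝ᵥ (Hᴴ *ᵥ x) = star (H *ᵥ w) ⬝ᵥ x := by
  rw [dotProduct_mulVec, star_mulVec]

theorem star_dotProduct_vecMulVec_sub_smul_gram_mulVec [DecidableEq n] (H : Matrix m n R)
    (a : m → R) (α s : R) (w : n → R) :
    star w ⬝ᵥ ((vecMulVec (Hᴴ *ᵥ a) (star (Hᴴ *ᵥ a)) - α • (s • 1 + Hᴴ * H)) *ᵥ w)
      = (star (H *ᵥ w) ⬝ᵥ a) * (star a ⬝ᵥ (H *ᵥ w))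
        - α * (s * (star w ⬝ᵥ w) + star (H *ᵥ w) ⬝ᵥ (H *ᵥ w)) := by
  have hHa : star (Hᴴ *ᵥ a) ⬝ᵥ w = star a ⬝ᵥ (H *ᵥ w) := by
    rw [star_mulVec, conjTranspose_conjTranspose, dotProduct_mulVec]
  rw [sub_mulVec, dotProduct_sub, dotProduct_vecMulVec_mulVec, hHa, smul_mulVec, dotProduct_smul,
    add_mulVec, dotProduct_add, smul_mulVec, one_mulVec, dotProduct_smul, ← mulVec_mulVec,
    star_dotProduct_conjTranspose_mulVec, star_dotProduct_conjTranspose_mulVec, smul_eq_mul,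
    smul_eq_mul]

end StarDotProduct

theorem Complex.star_dotProduct_self {n : Type*} [Fintype n] (v : n → ℂ) :
    star v ⬝ᵥ v = ((∑ i, Complex.normSq (v i) : ℝ) : ℂ) := by
  push_cast
  simp [dotProduct, Complex.normSq_eq_conj_mul_self]

theorem sinr_eq_iff {s A B G S : ℝ} (hs : 0 < s) (hB : 0 ≤ B) (hG : 0 ≤ G) :
    s⁻¹ * (A - (s + B)⁻¹ * G) = S ↔ G - (A - s * S) * (s + B) = 0 ∧ s * S ≤ A := by
  have hsB : 0 < s + B := by positivity
  have key : s⁻¹ * (A - (s + B)⁻¹ * G) = S ↔ G = (A - s * S) * (s + B) := by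
    field_simp
    constructor <;> intro h <;> linarith
  rw [key, sub_eq_zero]
  refine ⟨fun h => ⟨h, ?_⟩, And.left⟩
  nlinarith

theorem stmt12_general (NT NR : ℕ)
    (σ₂ : ℝ) (hσ₂ : 0 < σ₂) (S : ℝ)
    (H₁₂ H₂₂ : Matrix (Fin NR) (Fin NT) ℂ)
    (w₂ w₁ : Fin NT → ℂ) (hw₁ : Real.sqrt (star w₁ ⬝ᵥ w₁).re = 1)
    (C : Matrix (Fin NT) (Fin NT) ℂ)
    (hC : C = vecMulVec (H₁₂ᴴ *ᵥ (H₂₂ *ᵥ w₂)) (star (H₁₂ᴴ *ᵥ (H₂₂ *ᵥ w₂)))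
        - (star w₂ ⬝ᵥ (H₂₂ᴴ *ᵥ (H₂₂ *ᵥ w₂)) - ((σ₂ : ℂ) ^ 2 * (S : ℂ)))
            • ((σ₂ : ℂ) ^ 2 • (1 : Matrix (Fin NT) (Fin NT) ℂ) + H₁₂ᴴ * H₁₂)) :
    (star w₂ ⬝ᵥ (H₂₂ᴴ *ᵥ
        ((((σ₂ : ℂ) ^ 2 • (1 : Matrix (Fin NR) (Fin NR) ℂ)
            + vecMulVec (H₁₂ *ᵥ w₁) (star (H₁₂ *ᵥ w₁)))⁻¹) *ᵥ (H₂₂ *ᵥ w₂)))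
        = (S : ℂ))
      ↔ (star w₁ ⬝ᵥ (C *ᵥ w₁) = 0
          ∧ σ₂ ^ 2 * S ≤ (star w₂ ⬝ᵥ (H₂₂ᴴ *ᵥ (H₂₂ *ᵥ w₂))).re) := by
  have hw₁' : star w₁ ⬝ᵥ w₁ = 1 := by
    rw [Complex.star_dotProduct_self, Complex.ofReal_re, Real.sqrt_eq_one] at hw₁
    rw [Complex.star_dotProduct_self, hw₁, Complex.ofReal_one]
  set a := H₂₂ *ᵥ w₂
  set b := H₁₂ *ᵥ w₁
  have hab : star a ⬝ᵥ b * (star b ⬝ᵥ a) = (Complex.normSq (star b ⬝ᵥ a) : ℂ) := by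
    rw [Complex.normSq_eq_conj_mul_self, ← Complex.star_def, star_dotProduct]
  have hσ : (σ₂ : ℂ) ^ 2 ≠ 0 := by exact_mod_cast (pow_pos hσ₂ 2).ne'
  have hσb : (σ₂ : ℂ) ^ 2 + star b ⬝ᵥ b ≠ 0 := by
    rw [Complex.star_dotProduct_self]
    exact_mod_cast (add_pos_of_pos_of_nonneg (pow_pos hσ₂ 2)
      (Finset.sum_nonneg fun i _ => Complex.normSq_nonneg (b i))).ne'
  rw [star_dotProduct_conjTranspose_mulVec, dotProduct_inv_smul_one_add_vecMulVec_mulVec hσ hσb,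
    hC, star_dotProduct_vecMulVec_sub_smul_gram_mulVec, star_dotProduct_conjTranspose_mulVec,
    hw₁', mul_one, mul_comm (star b ⬝ᵥ a), hab, Complex.star_dotProduct_self a,
    Complex.star_dotProduct_self b, Complex.ofReal_re]
  exact_mod_cast sinr_eq_iff (pow_pos hσ₂ 2)
    (Finset.sum_nonneg fun i _ => Complex.normSq_nonneg (b i)) (Complex.normSq_nonneg _)

/-- equivalent transformations, eq. (14): for a unit-norm `w₁`,
the SINR equality `w₂ᴴH₂₂ᴴ(σ₂²I + (H₁₂w₁)(H₁₂w₁)ᴴ)⁻¹H₂₂w₂ = S` holds iff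
`w₁ᴴCw₁ = 0` and `w₂ᴴH₂₂ᴴH₂₂w₂ ≥ σ₂²S`, where
`C = H₁₂ᴴH₂₂w₂w₂ᴴH₂₂ᴴH₁₂ − (w₂ᴴH₂₂ᴴH₂₂w₂ − σ₂²S)(σ₂²I + H₁₂ᴴH₁₂)`. -/
theorem stmt12 (NT NR : ℕ) (hNT : 0 < NT) (hNR : 0 < NR)
    (σ₂ : ℝ) (hσ₂ : 0 < σ₂) (S : ℝ) (hS : 0 ≤ S)
    (H₁₂ H₂₂ : Matrix (Fin NR) (Fin NT) ℂ)
    (w₂ w₁ : Fin NT → ℂ) (hw₁ : Real.sqrt (star w₁ ⬝ᵥ w₁).re = 1)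
    (C : Matrix (Fin NT) (Fin NT) ℂ)
    (hC : C = vecMulVec (H₁₂ᴴ *ᵥ (H₂₂ *ᵥ w₂)) (star (H₁₂ᴴ *ᵥ (H₂₂ *ᵥ w₂)))
        - (star w₂ ⬝ᵥ (H₂₂ᴴ *ᵥ (H₂₂ *ᵥ w₂)) - ((σ₂ : ℂ) ^ 2 * (S : ℂ)))
            • ((σ₂ : ℂ) ^ 2 • (1 : Matrix (Fin NT) (Fin NT) ℂ) + H₁₂ᴴ * H₁₂)) :
    (star w₂ ⬝ᵥ (H₂₂ᴴ *ᵥ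
        ((((σ₂ : ℂ) ^ 2 • (1 : Matrix (Fin NR) (Fin NR) ℂ)
            + vecMulVec (H₁₂ *ᵥ w₁) (star (H₁₂ *ᵥ w₁)))⁻¹) *ᵥ (H₂₂ *ᵥ w₂)))
        = (S : ℂ))
      ↔ (star w₁ ⬝ᵥ (C *ᵥ w₁) = 0
          ∧ σ₂ ^ 2 * S ≤ (star w₂ ⬝ᵥ (H₂₂ᴴ *ᵥ (H₂₂ *ᵥ w₂))).re) :=
  stmt12_general NT NR σ₂ hσ₂ S H₁₂ H₂₂ w₂ w₁ hw₁ C hC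
end
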